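/- arXiv:1511.07475 — 3 statements merged into one kernel-verified Lean document; each statement's English description precedes it below -/
import Mathlib

section
/- Let S be an integral scheme (reduced and irreducible) which is normal in the sense that the local ring of S at every point is an integrally closed domain, let η be the generic point of S, and let f : F ⟶ S be a finite morphism of schemes. Then composition with the canonical morphism Spec κ(η) ⟶ S induces a bijection from the set of sections of f (morphisms σ : S ⟶ F with f ∘ σ = id_S) to the set of morphisms τ : Spec κ(η) ⟶ F satisfying f ∘ τ = (the canonical morphism Spec κ(η) ⟶ S). -/
/-!
Two sections of the separated morphism `f` that agree at the dense generic point `η` are equal,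
which gives injectivity. For surjectivity, base change `f` to `Spec O_{S,x}`: the result is
`Spec B` with `B` finite over `O_{S,x}`, and a `κ(η)`-point of it is a ring map from `B` to the
fraction field of `O_{S,x}`, which lands in `O_{S,x}` because the stalk is integrally closed. The
resulting section over `Spec O_{S,x}` spreads out to a neighbourhood of `x` since `f` is of
finite type, and these local sections glue because they all agree at `η`.
-/

open AlgebraicGeometry CategoryTheory CategoryTheory.Limits

universe u

theorem AlgHom.exists_ofId_comp_eq_of_isIntegrallyClosedIn {A B K : Type*} [CommRing A]
    [CommRing B] [CommRing K] [Algebra A B] [Algebra A K] [Algebra.IsIntegral A B]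
    [IsIntegrallyClosedIn A K] (β : B →ₐ[A] K) :
    ∃ ψ : B →ₐ[A] A, (Algebra.ofId A K).comp ψ = β := by
  have hβ : ∀ b, β b ∈ (⊥ : Subalgebra A K) := fun b =>
    IsIntegrallyClosedIn.isIntegral_iff.mp ((Algebra.IsIntegral.isIntegral b).map β)
  let e := Algebra.botEquivOfInjective (IsIntegralClosure.algebraMap_injective A A K)
  exact ⟨e.toAlgHom.comp (β.codRestrict ⊥ hβ),
    AlgHom.ext fun b => congrArg Subtype.val (e.symm_apply_apply ⟨β b, hβ b⟩)⟩

namespace AlgebraicGeometry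

lemma Scheme.Hom.eq_isoSpec_hom_comp_SpecMap {P : Scheme.{u}} [IsAffine P] {R : CommRingCat.{u}}
    (p : P ⟶ Spec R) : p = P.isoSpec.hom ≫ Spec.map ((Scheme.ΓSpecIso R).inv ≫ p.appTop) := by
  simp only [Scheme.isoSpec, asIso_hom, Spec.map_comp, ← Scheme.toSpecΓ_naturality_assoc,
    ← SpecMap_ΓSpecIso_hom]
  simp

section IntegralLifting

variable {A K : CommRingCat.{u}} [Algebra A K] [IsIntegrallyClosedIn A K]

theorem _root_.CommRingCat.exists_retraction_of_isIntegral {B : CommRingCat.{u}} (ι : A ⟶ B)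
    (hι : ι.hom.IsIntegral) (β : B ⟶ K) (h : ι ≫ β = CommRingCat.ofHom (algebraMap A K)) :
    ∃ ψ : B ⟶ A, ι ≫ ψ = 𝟙 A ∧ ψ ≫ CommRingCat.ofHom (algebraMap A K) = β := by
  let := ι.hom.toAlgebra
  have : Algebra.IsIntegral A B := ⟨hι⟩
  obtain ⟨ψ, hψ⟩ := AlgHom.exists_ofId_comp_eq_of_isIntegrallyClosedIn
    { β.hom with commutes' := fun a => congr(($h).hom a) }
  exact ⟨CommRingCat.ofHom ψ.toRingHom, CommRingCat.hom_ext (RingHom.ext ψ.commutes),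
    CommRingCat.hom_ext (RingHom.ext fun b => congr($hψ b))⟩

theorem exists_section_of_isIntegralHom {P : Scheme.{u}} (p : P ⟶ Spec A) [IsIntegralHom p]
    (u : Spec K ⟶ P) (hu : u ≫ p = Spec.map (CommRingCat.ofHom (algebraMap A K))) :
    ∃ s : Spec A ⟶ P, s ≫ p = 𝟙 _ ∧ Spec.map (CommRingCat.ofHom (algebraMap A K)) ≫ s = u := by
  have : IsAffine P := isAffine_of_isAffineHom p
  set ι := (Scheme.ΓSpecIso A).inv ≫ p.appTop
  have hp : p = P.isoSpec.hom ≫ Spec.map ι := p.eq_isoSpec_hom_comp_SpecMap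
  have hι : ι.hom.IsIntegral := by
    rw [← IsIntegralHom.SpecMap_iff, show Spec.map ι = P.isoSpec.inv ≫ p by
      rw [hp, Iso.inv_hom_id_assoc]]
    infer_instance
  obtain ⟨β, hβ⟩ := Spec.map_surjective (u ≫ P.isoSpec.hom)
  obtain ⟨ψ, hιψ, hψβ⟩ := CommRingCat.exists_retraction_of_isIntegral ι hι β
    (Spec.map_injective (by rw [Spec.map_comp, hβ, Category.assoc, ← hp, hu]))
  refine ⟨Spec.map ψ ≫ P.isoSpec.inv, ?_, ?_⟩
  · rw [hp, Category.assoc, Iso.inv_hom_id_assoc, ← Spec.map_comp, hιψ, Spec.map_id]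
  · rw [← Category.assoc, ← Spec.map_comp, hψβ, hβ, Category.assoc, Iso.hom_inv_id,
      Category.comp_id]

theorem exists_lift_of_isIntegralHom {F S : Scheme.{u}} (f : F ⟶ S) [IsIntegralHom f]
    (g : Spec A ⟶ S) (τ : Spec K ⟶ F)
    (h : τ ≫ f = Spec.map (CommRingCat.ofHom (algebraMap A K)) ≫ g) :
    ∃ φ : Spec A ⟶ F, φ ≫ f = g ∧ Spec.map (CommRingCat.ofHom (algebraMap A K)) ≫ φ = τ := by
  obtain ⟨s, hs, hsτ⟩ := exists_section_of_isIntegralHom (pullback.snd f g)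
    (pullback.lift τ _ h) (pullback.lift_snd _ _ _)
  exact ⟨s ≫ pullback.fst f g, by rw [Category.assoc, pullback.condition, reassoc_of% hs],
    by rw [reassoc_of% hsτ, pullback.lift_fst]⟩

end IntegralLifting

lemma Scheme.Opens.fromSpecStalkOfMem_homOfLE {X : Scheme.{u}} {V W : X.Opens} (hVW : V ≤ W)
    (x : X) (hxV : x ∈ V) :
    V.fromSpecStalkOfMem x hxV ≫ X.homOfLE hVW = W.fromSpecStalkOfMem x (hVW hxV) := by
  rw [← cancel_mono W.ι, Category.assoc, Scheme.homOfLE_ι, Scheme.Opens.fromSpecStalkOfMem_ι,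
    Scheme.Opens.fromSpecStalkOfMem_ι]

instance isDominant_fromSpecStalkOfMem_genericPoint {X : Scheme.{u}} [IrreducibleSpace X]
    (U : X.Opens) (h : genericPoint X ∈ U) :
    IsDominant (U.fromSpecStalkOfMem (genericPoint X) h) := by
  have hclosedPoint : U.fromSpecStalkOfMem (genericPoint X) h (IsLocalRing.closedPoint _) =
      ⟨genericPoint X, h⟩ := U.ι.isOpenEmbedding.injective <| by
    change (U.fromSpecStalkOfMem (genericPoint X) h ≫ U.ι) _ = genericPoint X
    rw [Scheme.Opens.fromSpecStalkOfMem_ι, Scheme.fromSpecStalk_closedPoint]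
  refine ⟨((dense_iff_closure_eq.mpr (genericPoint_spec X).def).preimage
    U.isOpen.isOpenMap_subtype_val).mono ?_⟩
  rintro ⟨_, _⟩ rfl
  exact ⟨_, hclosedPoint⟩

instance isDominant_fromSpecResidueField_genericPoint (X : Scheme.{u}) [IrreducibleSpace X] :
    IsDominant (X.fromSpecResidueField (genericPoint X)) :=
  ⟨by rw [DenseRange, Scheme.range_fromSpecResidueField, dense_iff_closure_eq,
    (genericPoint_spec X).def]⟩

instance isIso_residue_genericPoint (X : Scheme.{u}) [IsIntegral X] :
    IsIso (X.residue (genericPoint X)) :=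
  (RingEquiv.ofBijective (X.residue (genericPoint X)).hom
    ⟨(X.residue _).hom.injective, Ideal.Quotient.mk_surjective⟩).toCommRingCatIso.isIso_hom

theorem exists_local_section_of_isIntegralHom {F S : Scheme.{u}} [IsIntegral S] (f : F ⟶ S)
    [IsIntegralHom f] [LocallyOfFiniteType f] (x : S) [IsIntegrallyClosed (S.presheaf.stalk x)]
    (τ : Spec S.functionField ⟶ F) (hτ : τ ≫ f = S.fromSpecStalk (genericPoint S)) :
    ∃ (U : S.Opens) (_ : x ∈ U) (g : U.toScheme ⟶ F), g ≫ f = U.ι ∧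
      ∀ hηU : genericPoint S ∈ U, U.fromSpecStalkOfMem (genericPoint S) hηU ≫ g = τ := by
  have hspec : Spec.map (CommRingCat.ofHom (algebraMap (S.presheaf.stalk x) S.functionField)) ≫
      S.fromSpecStalk x = S.fromSpecStalk (genericPoint S) :=
    Scheme.SpecMap_stalkSpecializes_fromSpecStalk ((genericPoint_spec S).specializes trivial)
  obtain ⟨φ, hφf, hφτ⟩ :=
    exists_lift_of_isIntegralHom f (S.fromSpecStalk x) τ (hτ.trans hspec.symm)
  obtain ⟨U, hxU, g, rfl, hgf⟩ :=
    spread_out_of_isGermInjective' (𝟙 S) f φ (by rw [hφf, Category.comp_id])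
  refine ⟨U, hxU, g, by rw [hgf, Category.comp_id], fun hηU => ?_⟩
  have hη : Spec.map (CommRingCat.ofHom (algebraMap (S.presheaf.stalk x) S.functionField)) ≫
      U.fromSpecStalkOfMem x hxU = U.fromSpecStalkOfMem (genericPoint S) hηU := by
    rw [← cancel_mono U.ι, Category.assoc, Scheme.Opens.fromSpecStalkOfMem_ι,
      Scheme.Opens.fromSpecStalkOfMem_ι, hspec]
  rw [← hη, Category.assoc, hφτ]

theorem exists_section_of_forall_exists_local_section {F S : Scheme.{u}} [IsIntegral S]
    (f : F ⟶ S) [IsSeparated f] (τ : Spec S.functionField ⟶ F)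
    (hloc : ∀ x : S, ∃ (U : S.Opens) (_ : x ∈ U) (g : U.toScheme ⟶ F), g ≫ f = U.ι ∧
      ∀ hηU : genericPoint S ∈ U, U.fromSpecStalkOfMem (genericPoint S) hηU ≫ g = τ) :
    ∃ σ : S ⟶ F, σ ≫ f = 𝟙 S ∧ S.fromSpecStalk (genericPoint S) ≫ σ = τ := by
  choose U hxU g hgf hgτ using hloc
  have hηU (x : S) : genericPoint S ∈ U x :=
    ((genericPoint_spec S).mem_open_set_iff (U x).2).mpr ⟨x, trivial, hxU x⟩
  let 𝒰 : S.OpenCover := Scheme.Cover.mkOfCovers S (fun x => (U x).toScheme) (fun x => (U x).ι)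
    (fun y => ⟨y, ⟨y, hxU y⟩, rfl⟩)
  have hcomp (x y : S) :
      pullback.fst (U x).ι (U y).ι ≫ g x = pullback.snd (U x).ι (U y).ι ≫ g y := by
    have hη : genericPoint S ∈ U x ⊓ U y := ⟨hηU x, hηU y⟩
    rw [← cancel_epi (isPullback_opens_inf (U x) (U y)).isoPullback.hom,
      IsPullback.isoPullback_hom_fst_assoc, IsPullback.isoPullback_hom_snd_assoc]
    refine ext_of_isDominant_of_isSeparated f ?_ ((U x ⊓ U y).fromSpecStalkOfMem _ hη) ?_
    · simp only [Category.assoc, hgf, Scheme.homOfLE_ι]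
    · rw [reassoc_of% Scheme.Opens.fromSpecStalkOfMem_homOfLE inf_le_left,
        reassoc_of% Scheme.Opens.fromSpecStalkOfMem_homOfLE inf_le_right, hgτ, hgτ]
  have hglue (x : S) : (U x).ι ≫ 𝒰.glueMorphisms (fun x => g x) hcomp = g x :=
    𝒰.ι_glueMorphisms (fun x => g x) hcomp x
  refine ⟨𝒰.glueMorphisms (fun x => g x) hcomp, 𝒰.hom_ext _ _ fun x => ?_, ?_⟩
  · have h := hgf x
    rw [← hglue x, Category.assoc] at h
    exact h.trans (Category.comp_id _).symm
  · rw [← (U _).fromSpecStalkOfMem_ι _ (hxU (genericPoint S)), Category.assoc, hglue, hgτ]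

end AlgebraicGeometry

/-- For an integral normal scheme `S` with generic point `η` and a finite morphism
`f : F ⟶ S`, composition with the canonical morphism `Spec κ(η) ⟶ S` is a bijection
from the sections of `f` over `S` to the morphisms `Spec κ(η) ⟶ F` over `S`. -/
theorem sections_bijective_of_finite_of_normal
    {S F : Scheme} [IsIntegral S]
    (hnorm : ∀ x : S, IsDomain (S.presheaf.stalk x) ∧
      IsIntegrallyClosed (S.presheaf.stalk x))
    (η : S) (hgen : IsGenericPoint η Set.univ)
    (f : F ⟶ S) [hf : IsFinite f] :
    Function.Bijective
      (fun σ : {σ : S ⟶ F // σ ≫ f = 𝟙 S} =>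
        (⟨S.fromSpecResidueField η ≫ σ.1, by
            rw [Category.assoc, σ.2, Category.comp_id]⟩ :
          {τ : Spec (S.residueField η) ⟶ F // τ ≫ f = S.fromSpecResidueField η})) := by
  obtain rfl : η = genericPoint S := hgen.eq (genericPoint_spec S)
  refine ⟨fun σ₁ σ₂ h => Subtype.ext (ext_of_isDominant_of_isSeparated f (σ₁.2.trans σ₂.2.symm)
    (S.fromSpecResidueField _) congr($h.1)), ?_⟩
  rintro ⟨τ, hτ⟩
  have hτ' : (inv (Spec.map (S.residue _)) ≫ τ) ≫ f = S.fromSpecStalk (genericPoint S) := by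
    rw [Category.assoc, hτ, Scheme.fromSpecResidueField, IsIso.inv_hom_id_assoc]
  obtain ⟨σ, hσf, hστ⟩ := exists_section_of_forall_exists_local_section f _ fun x =>
    have := (hnorm x).2
    exists_local_section_of_isIntegralHom f x _ hτ'
  refine ⟨⟨σ, hσf⟩, Subtype.ext ?_⟩
  change Spec.map (S.residue _) ≫ S.fromSpecStalk _ ≫ σ = τ
  rw [hστ, IsIso.hom_inv_id_assoc]
end

section
/- Let G be a group acting on an abelian group B by additive automorphisms, and suppose B is torsion-free. Then for every abelian group R, the homomorphism j_R : B^G ⊗_ℤ R → B ⊗_ℤ R induced by tensoring the inclusion B^G ↪ B with the identity of R is injective. -/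
/-!
The quotient `B ⧸ Bᴳ` is torsion-free: if `n • b` is fixed then `n • (g • b - b) = 0`. Over `ℤ`
torsion-free modules are flat, so `Tor₁(B ⧸ Bᴳ, R) = 0` and tensoring `0 → Bᴳ → B → B ⧸ Bᴳ → 0`
with `R` keeps the first map injective.
-/

open TensorProduct

/-- The `ℤ`-submodule of `G`-fixed elements of an abelian group `B` with an action of a
group `G` by additive automorphisms. -/
def fixedSubmodule (G B : Type*) [Group G] [AddCommGroup B] [DistribMulAction G B] :
    Submodule ℤ B where
  carrier := {b | ∀ g : G, g • b = b}
  add_mem' := by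
    intro a b ha hb g
    rw [smul_add, ha g, hb g]
  zero_mem' := fun g => smul_zero g
  smul_mem' := by
    intro n b hb g
    have h : g • (n • b) = n • (g • b) :=
      AddMonoidHom.map_zsmul (DistribMulAction.toAddMonoidHom B g) n b
    rw [h, hb g]

namespace LinearMap

variable {R : Type*} [CommRing R] {N M Q P : Type*} [AddCommGroup N] [Module R N]
  [AddCommGroup M] [Module R M] [AddCommGroup Q] [Module R Q] [AddCommGroup P] [Module R P]

theorem rTensor_lTensor_comm {A A' C C' : Type*} [AddCommGroup A] [Module R A]
    [AddCommGroup A'] [Module R A'] [AddCommGroup C] [Module R C] [AddCommGroup C'] [Module R C']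
    (a : A →ₗ[R] A') (c : C →ₗ[R] C') (t : A ⊗[R] C) :
    a.rTensor C' (c.lTensor A t) = c.lTensor A' (a.rTensor C t) := by
  rw [← comp_apply, ← comp_apply, rTensor_comp_lTensor, lTensor_comp_rTensor]

variable {f : N →ₗ[R] M} {g : M →ₗ[R] Q}

/-- The diagram chase behind `Tor₁(Q, P) = 0`: tensor `0 → N → M → Q → 0` with a presentation
`0 → K → F → P → 0`; flatness of `Q` makes `Q ⊗ K → Q ⊗ F` injective and flatness of `F` makes
`N ⊗ F → M ⊗ F` injective. -/
theorem rTensor_injective_of_exact_of_flat_presentation {K F : Type*} [AddCommGroup K]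
    [Module R K] [AddCommGroup F] [Module R F] [Module.Flat R F] [Module.Flat R Q]
    {κ : K →ₗ[R] F} {π : F →ₗ[R] P} (hκ : Function.Injective κ) (hκπ : Function.Exact κ π)
    (hπ : Function.Surjective π) (hf : Function.Injective f) (hfg : Function.Exact f g)
    (hg : Function.Surjective g) :
    Function.Injective (f.rTensor P) := by
  refine (injective_iff_map_eq_zero _).mpr fun x hx ↦ ?_
  obtain ⟨x, rfl⟩ := lTensor_surjective N hπ x
  obtain ⟨z, hz⟩ := (lTensor_exact M hκπ hπ (f.rTensor F x)).mp <| by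
    rw [← rTensor_lTensor_comm, hx]
  obtain ⟨w, rfl⟩ : ∃ w, f.rTensor K w = z := by
    refine (rTensor_exact K hfg hg z).mp <|
      Module.Flat.lTensor_preserves_injective_linearMap κ hκ ?_
    rw [← rTensor_lTensor_comm, hz, ← rTensor_comp_apply, hfg.linearMap_comp_eq_zero,
      rTensor_zero, zero_apply, map_zero]
  have hw : κ.lTensor N w = x := by
    refine Module.Flat.rTensor_preserves_injective_linearMap f hf ?_
    rw [← hz, rTensor_lTensor_comm]
  rw [← hw]
  exact (lTensor_exact N hκπ hπ).apply_apply_eq_zero w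

theorem rTensor_injective_of_exact_of_flat [Module.Flat R Q] (hf : Function.Injective f)
    (hfg : Function.Exact f g) (hg : Function.Surjective g) :
    Function.Injective (f.rTensor P) :=
  rTensor_injective_of_exact_of_flat_presentation (ker _).injective_subtype
    (exact_subtype_ker_map _) (Finsupp.linearCombination_id_surjective R P) hf hfg hg

end LinearMap

instance isTorsionFree_quotient_fixedSubmodule {G B : Type*} [Group G] [AddCommGroup B]
    [DistribMulAction G B] [NoZeroSMulDivisors ℤ B] :
    Module.IsTorsionFree ℤ (B ⧸ fixedSubmodule G B) := by
  refine .of_smul_eq_zero fun n q hnq ↦ ?_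
  obtain ⟨b, rfl⟩ := Submodule.mkQ_surjective _ q
  rw [← map_smul, Submodule.mkQ_apply, Submodule.Quotient.mk_eq_zero] at hnq
  refine or_iff_not_imp_left.mpr fun hn ↦ (Submodule.Quotient.mk_eq_zero _).mpr fun γ ↦ ?_
  have : n • (γ • b - b) = 0 := by rw [smul_sub, ← smul_comm, hnq γ, sub_self]
  exact sub_eq_zero.mp ((smul_eq_zero.mp this).resolve_left hn)

/-- If a group `G` acts on a torsion-free abelian group `B` by additive automorphisms,
then for every abelian group `R` the natural map `Bᴳ ⊗_ℤ R → B ⊗_ℤ R`, induced by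
tensoring the inclusion `Bᴳ ↪ B` with the identity of `R`, is injective. -/
theorem rTensor_fixed_injective {G B : Type*} [Group G] [AddCommGroup B]
    [DistribMulAction G B] [NoZeroSMulDivisors ℤ B]
    (R : Type*) [AddCommGroup R] :
    Function.Injective
      (LinearMap.rTensor R (fixedSubmodule G B).subtype :
        (fixedSubmodule G B) ⊗[ℤ] R →ₗ[ℤ] B ⊗[ℤ] R) :=
  LinearMap.rTensor_injective_of_exact_of_flat (fixedSubmodule G B).injective_subtype
    (LinearMap.exact_subtype_mkQ _) (Submodule.mkQ_surjective _)
end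

section
/- Let G be a finite group acting on a torsion-free abelian group B by additive automorphisms, and let G act on B ⊗_ℤ R (for any abelian group R) through the first factor, i.e., by g·(b ⊗ r) = (g·b) ⊗ r. Then the image of the natural map j_R : B^G ⊗_ℤ R → B ⊗_ℤ R is contained in the fixed subgroup (B ⊗_ℤ R)^G; and if for every prime number p the image of j_{ℤ/pℤ} : B^G ⊗_ℤ ℤ/pℤ → B ⊗_ℤ ℤ/pℤ equals all of (B ⊗_ℤ ℤ/pℤ)^G, then for every abelian group R the image of j_R equals all of (B ⊗_ℤ R)^G (so that j_R is a bijection from B^G ⊗_ℤ R onto (B ⊗_ℤ R)^G, being injective by torsion-freeness of B). -/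
/-!
Let `d : B → (G → B)` be `b ↦ (g ↦ g • b - b)`, so that `0 → Bᴳ → B → im d → 0` is exact. For a
fixed `t ∈ B ⊗ R` the element `(d ⊗ R) t` vanishes, because `G` is finite and so
`(G → B) ⊗ R = G → B ⊗ R`. By right exactness of `- ⊗ R`, `t` comes from `Bᴳ ⊗ R` as soon as
`im d ⊗ R → (G → B) ⊗ R` is injective, which holds when `(G → B) / im d` is torsion-free, hence
flat over `ℤ`. Torsion-freeness is checked one prime at a time: if `p • q = d b`, then `b ⊗ 1` is
fixed in `B ⊗ ℤ/p`, so by hypothesis `b ∈ Bᴳ + p B`, and then `q ∈ im d` because `B` is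
torsion-free.
-/

open TensorProduct

/-- The action of `g : G` on `B` as a `ℤ`-linear map. -/
def smulLinearMap {G B : Type*} [Group G] [AddCommGroup B] [DistribMulAction G B]
    (g : G) : B →ₗ[ℤ] B where
  toFun b := g • b
  map_add' := smul_add g
  map_smul' n b := by
    have h : g • (n • b) = n • (g • b) :=
      AddMonoidHom.map_zsmul (DistribMulAction.toAddMonoidHom B g) n b
    simpa using h

namespace Submodule

theorem isTorsionFree_quotient_of_prime_nsmul_mem {M : Type*} [AddCommGroup M]
    (N : Submodule ℤ M) (h : ∀ p : ℕ, p.Prime → ∀ x : M, p • x ∈ N → x ∈ N) :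
    Module.IsTorsionFree ℤ (M ⧸ N) := by
  have hnat : ∀ n : ℕ, n ≠ 0 → ∀ x : M, n • x ∈ N → x ∈ N := by
    intro n
    induction n using Nat.recOnMul with
    | zero => exact fun h0 => absurd rfl h0
    | one => simp
    | prime p hp => exact fun _ => h p hp
    | mul a b iha ihb =>
      intro hab x hx
      rw [mul_smul] at hx
      exact ihb (right_ne_zero_of_mul hab) x (iha (left_ne_zero_of_mul hab) _ hx)
  refine .of_smul_eq_zero fun z q hzq => ?_
  induction q using Submodule.Quotient.induction_on with | H x => ?_
  rw [← Submodule.Quotient.mk_smul, Submodule.Quotient.mk_eq_zero] at hzq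
  rw [Submodule.Quotient.mk_eq_zero]
  obtain ⟨n, rfl | rfl⟩ := Int.eq_nat_or_neg z
  all_goals
    rcases eq_or_ne n 0 with rfl | hn
    · simp
    · simp only [neg_smul, neg_mem_iff, natCast_zsmul] at hzq
      exact Or.inr (hnat n hn x hzq)

end Submodule

namespace ZMod

variable {M : Type*} [AddCommGroup M] (n : ℕ)

theorem exists_tmul_one_eq (x : M ⊗[ℤ] ZMod n) : ∃ m : M, m ⊗ₜ[ℤ] (1 : ZMod n) = x := by
  induction x with
  | zero => exact ⟨0, zero_tmul _ _⟩
  | tmul m c =>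
    refine ⟨(c.cast : ℤ) • m, ?_⟩
    rw [smul_tmul, zsmul_eq_mul, mul_one, intCast_zmod_cast]
  | add x y hx hy =>
    obtain ⟨a, rfl⟩ := hx
    obtain ⟨b, rfl⟩ := hy
    exact ⟨a + b, add_tmul _ _ _⟩

theorem tmul_one_eq_zero_iff (m : M) :
    m ⊗ₜ[ℤ] (1 : ZMod n) = 0 ↔ ∃ c : M, n • c = m := by
  let e :=
    TensorProduct.comm ℤ M (ZMod n) ≪≫ₗ
      (Int.quotientSpanNatEquivZMod n).toIntAlgEquiv.toLinearEquiv.symm.rTensor M ≪≫ₗ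
      quotTensorEquivQuotSMul M _
  have he : e (m ⊗ₜ 1) = Submodule.Quotient.mk m := by
    simp [e]
  rw [← e.map_eq_zero_iff, he, Submodule.Quotient.mk_eq_zero, Submodule.ideal_span_singleton_smul,
    Submodule.mem_smul_pointwise_iff_exists]
  simp

end ZMod

namespace LinearMap

theorem rTensor_pi_eq_zero {S ι M N Q : Type*} [CommSemiring S] [Finite ι]
    [AddCommMonoid M] [AddCommMonoid N] [AddCommMonoid Q] [Module S M] [Module S N] [Module S Q]
    (ψ : ι → M →ₗ[S] N) {t : M ⊗[S] Q} (ht : ∀ i, rTensor Q (ψ i) t = 0) :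
    rTensor Q (LinearMap.pi ψ) t = 0 := by
  classical
  cases nonempty_fintype ι
  apply (TensorProduct.piLeft S Q fun _ : ι => N).injective
  ext i : 1
  have hcomp : proj i ∘ₗ (TensorProduct.piLeft S Q fun _ : ι => N).toLinearMap ∘ₗ
      rTensor Q (LinearMap.pi ψ) = rTensor Q (ψ i) :=
    TensorProduct.ext' fun m q => by simp
  simpa using (LinearMap.congr_fun hcomp t).trans (ht i)

theorem _root_.Function.Exact.mem_range_rTensor_of_rTensor_eq_zero {S N M P Q : Type*}
    [CommRing S] [AddCommGroup N] [AddCommGroup M] [AddCommGroup P] [AddCommGroup Q]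
    [Module S N] [Module S M] [Module S P] [Module S Q]
    {f : N →ₗ[S] M} {φ : M →ₗ[S] P} (hfφ : Function.Exact f φ) [Module.Flat S (P ⧸ range φ)]
    {t : M ⊗[S] Q} (ht : rTensor Q φ t = 0) : t ∈ range (rTensor Q f) := by
  have hinj : Function.Injective (rTensor Q (range φ).subtype) := by
    rw [← lTensor_inj_iff_rTensor_inj]
    exact lTensor_injective_of_exact_of_flat _ (range φ).mkQ_surjective _
      (range φ).injective_subtype (exact_subtype_mkQ _) Q
  have hrestrict : rTensor Q φ.rangeRestrict t = 0 :=
    hinj (by rw [← rTensor_comp_apply, subtype_comp_codRestrict, ht, map_zero])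
  have hexact : Function.Exact f φ.rangeRestrict := by
    rw [exact_iff, ker_rangeRestrict]
    exact exact_iff.mp hfφ
  exact (rTensor_exact Q hexact φ.surjective_rangeRestrict t).mp hrestrict

end LinearMap

open LinearMap

section ZerothCoboundary

variable (G B : Type*) [Group G] [AddCommGroup B] [DistribMulAction G B]

def zerothCoboundary : B →ₗ[ℤ] (G → B) :=
  LinearMap.pi fun g => smulLinearMap g - LinearMap.id

@[simp]
theorem zerothCoboundary_apply (b : B) (g : G) : zerothCoboundary G B b g = g • b - b :=
  rfl

theorem exact_subtype_zerothCoboundary :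
    Function.Exact (fixedSubmodule G B).subtype (zerothCoboundary G B) := by
  intro b
  simp only [funext_iff, zerothCoboundary_apply, Pi.zero_apply, sub_eq_zero, Submodule.coe_subtype,
    Subtype.range_coe_subtype]
  rfl

variable {G B}

theorem smulLinearMap_comp_subtype_fixedSubmodule (g : G) :
    smulLinearMap g ∘ₗ (fixedSubmodule G B).subtype = (fixedSubmodule G B).subtype := by
  ext a
  exact a.2 g

theorem rTensor_zerothCoboundary_eq_zero [Finite G] {R : Type*} [AddCommGroup R]
    {t : B ⊗[ℤ] R} (ht : ∀ g : G, rTensor R (smulLinearMap g) t = t) :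
    rTensor R (zerothCoboundary G B) t = 0 :=
  rTensor_pi_eq_zero _ fun g => by
    rw [rTensor_sub, rTensor_id, LinearMap.sub_apply, ht g, id_apply, sub_self]

theorem mem_range_zerothCoboundary_of_nsmul_mem [NoZeroSMulDivisors ℤ B] {p : ℕ} (hp : p ≠ 0)
    (hsurj : ∀ t : B ⊗[ℤ] ZMod p, (∀ g : G, rTensor (ZMod p) (smulLinearMap g) t = t) →
      t ∈ range (rTensor (ZMod p) (fixedSubmodule G B).subtype))
    {q : G → B} (hq : p • q ∈ range (zerothCoboundary G B)) :
    q ∈ range (zerothCoboundary G B) := by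
  obtain ⟨b, hb⟩ := hq
  have hfix : ∀ g : G, rTensor (ZMod p) (smulLinearMap g) (b ⊗ₜ 1) = b ⊗ₜ 1 := by
    intro g
    have hgb : g • b = b + p • q g := by
      rw [← sub_eq_iff_eq_add', ← zerothCoboundary_apply, hb, Pi.smul_apply]
    rw [rTensor_tmul]
    change (g • b) ⊗ₜ 1 = _
    rw [hgb, add_tmul, (ZMod.tmul_one_eq_zero_iff p _).mpr ⟨_, rfl⟩, add_zero]
  obtain ⟨u, hu⟩ := hsurj _ hfix
  obtain ⟨a, rfl⟩ := ZMod.exists_tmul_one_eq p u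
  rw [rTensor_tmul] at hu
  obtain ⟨c, hc⟩ := (ZMod.tmul_one_eq_zero_iff p (b - a)).mp
    (by rw [TensorProduct.sub_tmul, ← hu, Submodule.coe_subtype, sub_self])
  have ha : zerothCoboundary G B a = 0 :=
    (exact_subtype_zerothCoboundary G B).apply_apply_eq_zero a
  refine ⟨c, smul_right_injective (G → B) (Int.natCast_ne_zero.mpr hp) ?_⟩
  simp only [natCast_zsmul, ← map_nsmul, hc, map_sub, ha, sub_zero, hb]

end ZerothCoboundary

/-- Let a finite group `G` act on a torsion-free abelian group `B` by additive
automorphisms, and let `G` act on `B ⊗_ℤ R` through the first factor.  Then the image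
of the natural map `j_R : Bᴳ ⊗_ℤ R → B ⊗_ℤ R` consists of `G`-fixed elements; and if
for every prime `p` the image of `j_{ℤ/pℤ}` equals all of `(B ⊗_ℤ ℤ/pℤ)ᴳ`, then for
every abelian group `R` the image of `j_R` equals all of `(B ⊗_ℤ R)ᴳ`. -/
theorem rTensor_fixed_surjective_of_primes {G B : Type*} [Group G] [Finite G]
    [AddCommGroup B] [DistribMulAction G B] [NoZeroSMulDivisors ℤ B] :
    (∀ (R : Type*) [AddCommGroup R]
      (x : (fixedSubmodule G B) ⊗[ℤ] R) (g : G),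
        LinearMap.rTensor R (smulLinearMap g)
            (LinearMap.rTensor R (fixedSubmodule G B).subtype x) =
          LinearMap.rTensor R (fixedSubmodule G B).subtype x) ∧
    ((∀ p : ℕ, p.Prime →
        ∀ t : B ⊗[ℤ] ZMod p,
          (∀ g : G, LinearMap.rTensor (ZMod p) (smulLinearMap g) t = t) →
          t ∈ LinearMap.range (LinearMap.rTensor (ZMod p) (fixedSubmodule G B).subtype)) →
      ∀ (R : Type*) [AddCommGroup R] (t : B ⊗[ℤ] R),
        (∀ g : G, LinearMap.rTensor R (smulLinearMap g) t = t) →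
        t ∈ LinearMap.range (LinearMap.rTensor R (fixedSubmodule G B).subtype)) := by
  refine ⟨fun R _ x g => ?_, fun hsurj R _ t ht => ?_⟩
  · rw [← rTensor_comp_apply, smulLinearMap_comp_subtype_fixedSubmodule]
  · have := (range (zerothCoboundary G B)).isTorsionFree_quotient_of_prime_nsmul_mem
      fun p hp _ => mem_range_zerothCoboundary_of_nsmul_mem hp.ne_zero (hsurj p hp)
    exact (exact_subtype_zerothCoboundary G B).mem_range_rTensor_of_rTensor_eq_zero
      (rTensor_zerothCoboundary_eq_zero ht)
end
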